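/- arXiv:2307.14762 — 4 statements merged into one kernel-verified Lean document; each statement's English description precedes it below -/
import Mathlib

section
/- Let 𝓜 = {M^{(p)} : p > 0} be a weight matrix satisfying (𝓜_{rai}). Then for every p > 0 there exist H ≥ 1 and p' > 0 such that for every k ∈ ℕ and all j₁, …, j_k ∈ ℕ₀ one has (M^{(p)}_{j₁}/j₁!)·…·(M^{(p)}_{j_k}/j_k!) ≤ H^{j₁+…+j_k} · M^{(p')}_{j₁+…+j_k}/(j₁+…+j_k)!. -/
open Filter Complex Asymptotics
open scoped Topology BigOperators

noncomputable section

/-- The open sector in ℂ of opening `α·π` bisected by the positive real axis. -/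
def Sector (α : ℝ) : Set ℂ := {z : ℂ | z ≠ 0 ∧ |Complex.arg z| < α * Real.pi / 2}

/-- The Roumieu ultraholomorphic class `A_{{M}}(S_α)`. -/
def ASet (M : ℕ → ℝ) (α : ℝ) : Set (ℂ → ℂ) :=
  {f | DifferentiableOn ℂ f (Sector α) ∧
    ∃ h > (0:ℝ), ∃ C : ℝ, ∀ j : ℕ, ∀ z ∈ Sector α,
      ‖iteratedDerivWithin j f (Sector α) z‖ ≤ C * h ^ j * M j}

/-- Equivalence of sequences: `a_j ≤ A·B^j·b_j` and `b_j ≤ A·B^j·a_j`. -/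
def SeqEquiv (a b : ℕ → ℝ) : Prop :=
  ∃ A > (0:ℝ), ∃ B > (0:ℝ), ∀ j : ℕ, a j ≤ A * B ^ j * b j ∧ b j ≤ A * B ^ j * a j

/-- Log-convexity: `L_j² ≤ L_{j-1}·L_{j+1}` for `j ≥ 1`. -/
def IsLogConvexSeq (L : ℕ → ℝ) : Prop := ∀ j : ℕ, L (j+1) ^ 2 ≤ L j * L (j+2)

/-- `Gbar s j = j^{s·j}` (with the convention `0⁰ = 1`, automatic for `rpow`). -/
def Gbar (s : ℝ) (j : ℕ) : ℝ := (j : ℝ) ^ (s * (j : ℝ))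

/-- Weight matrix: positive sequences, first term 1, nondecreasing in the parameter. -/
def IsWeightMatrix (M : ℝ → ℕ → ℝ) : Prop :=
  (∀ p > (0:ℝ), ∀ j : ℕ, 0 < M p j) ∧ (∀ p > (0:ℝ), M p 0 = 1) ∧
    (∀ p q : ℝ, 0 < p → p ≤ q → ∀ j : ℕ, M p j ≤ M q j)

/-- The class `A_{{𝓜}}(S_α)` associated with a weight matrix. -/
def AMatSet (M : ℝ → ℕ → ℝ) (α : ℝ) : Set (ℂ → ℂ) := {f | ∃ p > (0:ℝ), f ∈ ASet (M p) α}

/-- `M̌_j = M_j/j!`. -/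
def checkSeq (N : ℕ → ℝ) (j : ℕ) : ℝ := N j / (Nat.factorial j : ℝ)

/-- Condition `(𝓜_{rai})`. -/
def Mrai (M : ℝ → ℕ → ℝ) : Prop :=
  ∀ p > (0:ℝ), ∃ C > (0:ℝ), ∃ p' > (0:ℝ), ∀ j k : ℕ, 1 ≤ j → j ≤ k →
    (checkSeq (M p) j) ^ ((j:ℝ)⁻¹) ≤ C * (checkSeq (M p') k) ^ ((k:ℝ)⁻¹)

/-- Condition `(𝓜_{C^ω})`. -/
def MComega (M : ℝ → ℕ → ℝ) : Prop :=
  ∃ p > (0:ℝ),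
    0 < Filter.liminf (fun j : ℕ => (checkSeq (M p) j) ^ ((j:ℝ)⁻¹)) Filter.atTop

/-- Condition `(𝓜_{dc})`. -/
def Mdc (M : ℝ → ℕ → ℝ) : Prop :=
  ∀ p > (0:ℝ), ∃ C > (0:ℝ), ∃ p' > (0:ℝ), ∀ j : ℕ, M p (j+1) ≤ C ^ (j+1) * M p' j

/-- `N°_k`: maximum of `N_ℓ·N_{j₁}⋯N_{j_ℓ}` over `j_i ∈ ℕ, j₁+⋯+j_ℓ = k`; `N°₀ = 1`. -/
def circSeq (N : ℕ → ℝ) (k : ℕ) : ℝ :=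
  if k = 0 then 1 else
    sSup {x : ℝ | ∃ (l : ℕ) (js : Fin l → ℕ), (∀ i, 1 ≤ js i) ∧ (∑ i, js i) = k ∧
      x = N l * ∏ i, N (js i)}

/-- `(rai)` for a single sequence. -/
def SeqRai (N : ℕ → ℝ) : Prop :=
  ∃ C > (0:ℝ), ∀ j k : ℕ, 1 ≤ j → j ≤ k →
    (checkSeq N j) ^ ((j:ℝ)⁻¹) ≤ C * (checkSeq N k) ^ ((k:ℝ)⁻¹)

/-- `(dc)` for a single sequence. -/
def SeqDc (N : ℕ → ℝ) : Prop := ∃ D ≥ (1:ℝ), ∀ j : ℕ, N (j+1) ≤ D ^ (j+1) * N j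

/-- `(FdB)` for a single sequence. -/
def SeqFdB (N : ℕ → ℝ) : Prop :=
  ∃ C ≥ (1:ℝ), ∃ h ≥ (1:ℝ), ∀ j : ℕ, circSeq (checkSeq N) j ≤ C * h ^ j * checkSeq N j

/-- Condition `(𝓜_{FdB})`. -/
def MFdB (M : ℝ → ℕ → ℝ) : Prop :=
  ∀ p > (0:ℝ), ∃ p' > (0:ℝ), ∃ C : ℝ, ∀ k : ℕ, 1 ≤ k →
    (circSeq (checkSeq (M p)) k / checkSeq (M p') k) ^ ((k:ℝ)⁻¹) ≤ C

/-- `L` is the log-convex minorant of `a` (within positive log-convex sequences). -/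
def IsLcMinorant (a L : ℕ → ℝ) : Prop :=
  (∀ j, 0 < L j) ∧ IsLogConvexSeq L ∧ (∀ j, L j ≤ a j) ∧
    ∀ L' : ℕ → ℝ, (∀ j, 0 < L' j) → IsLogConvexSeq L' → (∀ j, L' j ≤ a j) → ∀ j, L' j ≤ L j

/-- Holomorphic closedness of a class of functions on `S_α`. -/
def HolClosed (S : Set (ℂ → ℂ)) (α : ℝ) : Prop :=
  ∀ f ∈ S, ∀ U : Set ℂ, IsOpen U → closure (f '' Sector α) ⊆ U →
    ∀ g : ℂ → ℂ, DifferentiableOn ℂ g U → g ∘ f ∈ S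

/-- Inverse closedness of a class of functions on `S_α`. -/
def InvClosed (S : Set (ℂ → ℂ)) (α : ℝ) : Prop :=
  ∀ f ∈ S, (∃ c > (0:ℝ), ∀ z ∈ Sector α, c ≤ ‖f z‖) → (fun z => (f z)⁻¹) ∈ S

/-- The class `H_{{𝓜}}(U)` for a weight matrix. -/
def HMatClass (M : ℝ → ℕ → ℝ) (U : Set ℂ) : Set (ℂ → ℂ) :=
  {g | DifferentiableOn ℂ g U ∧ ∀ K : Set ℂ, K ⊆ U → IsCompact K →
    ∃ p > (0:ℝ), ∃ h > (0:ℝ), ∃ C : ℝ, ∀ j : ℕ, ∀ z ∈ K,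
      ‖iteratedDerivWithin j g U z‖ ≤ C * h ^ j * M p j}

/-- The class `H_{{M}}(U)` for a single sequence. -/
def HSeqClass (N : ℕ → ℝ) (U : Set ℂ) : Set (ℂ → ℂ) :=
  {g | DifferentiableOn ℂ g U ∧ ∀ K : Set ℂ, K ⊆ U → IsCompact K →
    ∃ h > (0:ℝ), ∃ C : ℝ, ∀ j : ℕ, ∀ z ∈ K,
      ‖iteratedDerivWithin j g U z‖ ≤ C * h ^ j * N j}

/-- Closedness under composition for the matrix class. -/
def CompClosedMat (M : ℝ → ℕ → ℝ) (α : ℝ) : Prop :=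
  ∀ f ∈ AMatSet M α, ∀ U : Set ℂ, IsOpen U → closure (f '' Sector α) ⊆ U →
    ∀ g ∈ HMatClass M U, g ∘ f ∈ AMatSet M α

/-- Closedness under composition for a single-sequence class. -/
def CompClosedSeq (N : ℕ → ℝ) (α : ℝ) : Prop :=
  ∀ f ∈ ASet N α, ∀ U : Set ℂ, IsOpen U → closure (f '' Sector α) ⊆ U →
    ∀ g ∈ HSeqClass N U, g ∘ f ∈ ASet N α

/-- `f` is characteristic in `A_{{L}}(S_α)`. -/
def Characteristic (L : ℕ → ℝ) (α : ℝ) (f : ℂ → ℂ) : Prop :=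
  f ∈ ASet L α ∧ ∀ N : ℕ → ℝ, (∀ j, 0 < N j) → N 0 = 1 →
    f ∈ ASet N α → ASet N α ⊆ ASet L α → ASet N α = ASet L α

/-- Coefficient `2^{-n} M_n/m_n^n` of the `T_M`-transform. -/
def coefT (M : ℕ → ℝ) (n : ℕ) : ℝ := (1/2:ℝ)^n * (M n / (M (n+1) / M n) ^ n)

/-- The sequence of quotients `m_n = M_{n+1}/M_n`. -/
def quotSeq (M : ℕ → ℝ) (n : ℕ) : ℝ := M (n+1) / M n

/-- `R_j = ∑ 2^{-n}(M_n/m_n^n) m_n^j` (as a real tsum). -/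
def Rseq (M : ℕ → ℝ) (j : ℕ) : ℝ := ∑' n : ℕ, coefT M n * (quotSeq M n) ^ j

/-- The `T_M`-transform. -/
def Ttrans (M : ℕ → ℝ) (f : ℂ → ℂ) (z : ℂ) : ℂ :=
  ∑' n : ℕ, (coefT M n : ℂ) * f ((quotSeq M n : ℂ) * z)

/-- Weight function: continuous, nondecreasing, `ω(0)=0`, nonnegative, `ω(t)→∞`. -/
def IsWeightFunction (ω : ℝ → ℝ) : Prop :=
  ContinuousOn ω (Set.Ici 0) ∧ MonotoneOn ω (Set.Ici 0) ∧ ω 0 = 0 ∧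
    (∀ t ≥ (0:ℝ), 0 ≤ ω t) ∧ Filter.Tendsto ω Filter.atTop Filter.atTop

def Om0 (ω : ℝ → ℝ) : Prop := ∀ t ∈ Set.Icc (0:ℝ) 1, ω t = 0
def Om1 (ω : ℝ → ℝ) : Prop := ∃ L ≥ (1:ℝ), ∀ t ≥ (0:ℝ), ω (2*t) ≤ L * (ω t + 1)
def Om2 (ω : ℝ → ℝ) : Prop := ∃ C > (0:ℝ), ∃ t₀ : ℝ, ∀ t ≥ t₀, ω t ≤ C * t
def Om3 (ω : ℝ → ℝ) : Prop := Real.log =o[Filter.atTop] ω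
def Om4 (ω : ℝ → ℝ) : Prop := ConvexOn ℝ Set.univ (fun t => ω (Real.exp t))
def Om5 (ω : ℝ → ℝ) : Prop := ω =o[Filter.atTop] (fun t => t)
def Om6 (ω : ℝ → ℝ) : Prop := ∃ H ≥ (1:ℝ), ∀ t ≥ (0:ℝ), 2 * ω t ≤ ω (H * t) + H

/-- Condition `(α₀)` for a weight function. -/
def Alpha0 (ω : ℝ → ℝ) : Prop :=
  ∃ C ≥ (1:ℝ), ∃ t₀ ≥ (0:ℝ), ∀ lam ≥ (1:ℝ), ∀ t ≥ t₀, ω (lam * t) ≤ C * lam * ω t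

/-- The set `W₀`. -/
def InW0 (ω : ℝ → ℝ) : Prop := IsWeightFunction ω ∧ Om0 ω ∧ Om3 ω ∧ Om4 ω

/-- The set `W`. -/
def InW (ω : ℝ → ℝ) : Prop := InW0 ω ∧ Om1 ω

/-- The Legendre–Fenchel–Young conjugate `φ*_ω`. -/
def phiStar (ω : ℝ → ℝ) (x : ℝ) : ℝ :=
  sSup {r : ℝ | ∃ y : ℝ, 0 ≤ y ∧ r = x * y - ω (Real.exp y)}

/-- The weight matrix associated with `ω`: `W^{(ℓ)}_j = exp((1/ℓ)·φ*_ω(ℓj))`. -/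
def Wmat (ω : ℝ → ℝ) (ℓ : ℝ) (j : ℕ) : ℝ := Real.exp ((1/ℓ) * phiStar ω (ℓ * (j:ℝ)))

/-- The class `A_{{ω}}(S_α)`. -/
def AOmegaSet (ω : ℝ → ℝ) (α : ℝ) : Set (ℂ → ℂ) :=
  {f | DifferentiableOn ℂ f (Sector α) ∧ ∃ ℓ > (0:ℝ), ∃ C : ℝ,
    ∀ j : ℕ, ∀ z ∈ Sector α, ‖iteratedDerivWithin j f (Sector α) z‖ ≤ C * Wmat ω ℓ j}

/-- Closedness under composition for the `ω`-class. -/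
def CompClosedOmega (ω : ℝ → ℝ) (α : ℝ) : Prop :=
  ∀ f ∈ AOmegaSet ω α, ∀ U : Set ℂ, IsOpen U → closure (f '' Sector α) ⊆ U →
    ∀ g ∈ HMatClass (Wmat ω) U, g ∘ f ∈ AOmegaSet ω α

/-- One-sided matrix comparison `𝓜 {⪯} 𝓛`: `sup_{j≥1}(M^{(p)}_j/L^{(q)}_j)^{1/j} < ∞`. -/
def MatPreceq (M L : ℝ → ℕ → ℝ) : Prop :=
  ∀ p > (0:ℝ), ∃ q > (0:ℝ), ∃ C : ℝ, ∀ j : ℕ, 1 ≤ j → (M p j / L q j) ^ ((j:ℝ)⁻¹) ≤ C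

/-- `R`-equivalence of weight matrices. -/
def REquivMat (M L : ℝ → ℕ → ℝ) : Prop := MatPreceq M L ∧ MatPreceq L M

/-- under `(𝓜_{rai})`, products of `M̌^{(p)}`-terms are dominated by a single
`M̌^{(p')}`-term up to a geometric factor. -/
theorem stmt_0 (M : ℝ → ℕ → ℝ) (hM : IsWeightMatrix M) (hrai : Mrai M) :
    ∀ p > (0:ℝ), ∃ H ≥ (1:ℝ), ∃ p' > (0:ℝ), ∀ (k : ℕ) (js : Fin k → ℕ),
      (∏ i, checkSeq (M p) (js i)) ≤
        H ^ (∑ i, js i) * checkSeq (M p') (∑ i, js i) := by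
  intro p hp
  obtain ⟨C, hC, p', hp', hkey⟩ := hrai p hp
  refine ⟨max C 1, le_max_right _ _, p', hp', ?_⟩
  intro k js
  have hpos : ∀ q, 0 < q → ∀ j, 0 < checkSeq (M q) j := by
    intro q hq j
    exact div_pos (hM.1 q hq j) (by positivity)
  by_cases hs0 : (∑ i, js i) = 0
  · have hall : ∀ i ∈ Finset.univ, js i = 0 := by
      intro i _
      exact (Finset.sum_eq_zero_iff.1 hs0) i (Finset.mem_univ i)
    have h1 : ∀ i ∈ Finset.univ, checkSeq (M p) (js i) = 1 := by
      intro i hi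
      simp [hall i hi, checkSeq, hM.2.1 p hp]
    rw [Finset.prod_congr rfl h1, hs0]
    simp [checkSeq, hM.2.1 p' hp']
  · set s := ∑ i, js i with hs
    have hs1 : 1 ≤ s := Nat.one_le_iff_ne_zero.2 hs0
    set b := checkSeq (M p') s with hb
    have hbpos : 0 < b := hpos p' hp' s
    have hbound : ∀ i ∈ Finset.univ,
        checkSeq (M p) (js i) ≤ (max C 1) ^ (js i) * b ^ ((js i : ℝ)/(s:ℝ)) := by
      intro i _
      rcases Nat.eq_zero_or_pos (js i) with h0 | h1
      · simp [h0, checkSeq, hM.2.1 p hp]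
      · have hjk : js i ≤ s := Finset.single_le_sum (f := fun i => js i)
          (fun _ _ => Nat.zero_le _) (Finset.mem_univ i)
        have h := hkey (js i) s h1 hjk
        have hLpos : (0:ℝ) ≤ checkSeq (M p) (js i) ^ ((js i : ℝ)⁻¹) :=
          Real.rpow_nonneg (hpos p hp (js i)).le _
        have hpow := pow_le_pow_left₀ hLpos h (js i)
        rw [Real.rpow_inv_natCast_pow (hpos p hp (js i)).le h1.ne'] at hpow
        calc checkSeq (M p) (js i) ≤ (C * b ^ ((s:ℝ)⁻¹)) ^ (js i) := hpow
          _ = C ^ (js i) * (b ^ ((s:ℝ)⁻¹)) ^ (js i) := mul_pow _ _ _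
          _ ≤ (max C 1) ^ (js i) * b ^ ((js i : ℝ)/(s:ℝ)) := by
              rw [← Real.rpow_natCast (b ^ ((s:ℝ)⁻¹)) (js i), ← Real.rpow_mul hbpos.le]
              rw [show (s:ℝ)⁻¹ * (js i : ℝ) = (js i : ℝ)/(s:ℝ) by ring]
              have : C ^ (js i) ≤ (max C 1) ^ (js i) :=
                pow_le_pow_left₀ hC.le (le_max_left _ _) _
              exact mul_le_mul_of_nonneg_right this (Real.rpow_nonneg hbpos.le _)
    calc ∏ i, checkSeq (M p) (js i)
        ≤ ∏ i, (max C 1) ^ (js i) * b ^ ((js i : ℝ)/(s:ℝ)) :=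
          Finset.prod_le_prod (fun i _ => (hpos p hp (js i)).le) hbound
      _ = (∏ i, (max C 1) ^ (js i)) * ∏ i, b ^ ((js i : ℝ)/(s:ℝ)) :=
          Finset.prod_mul_distrib
      _ = (max C 1) ^ s * b := by
          rw [Finset.prod_pow_eq_pow_sum, ← Real.rpow_sum_of_pos hbpos]
          congr 1
          rw [← Finset.sum_div, show ∑ i, (js i : ℝ) = (s:ℝ) by rw [hs]; push_cast; rfl,
            div_self (by exact_mod_cast hs0 : (s:ℝ) ≠ 0), Real.rpow_one]
end
end

section
/- Let L be a positive sequence with L₀ = 1, let 0 < α ≤ 2, and let f ∈ A_{{L}}(S_α); set C_j(f) := sup_{z∈S_α} |f^{(j)}(z)| and suppose that for every j ∈ ℕ₀ the limit f^{(j)}(0) := lim_{z→0, z∈S_α} f^{(j)}(z) exists. Then: (1) if the sequence (|f^{(j)}(0)|)_j is equivalent to L, then the sequence (C_j(f))_j is equivalent to L; (2) if (C_j(f))_j is equivalent to L, then f is characteristic in A_{{L}}(S_α). -/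
open Filter Complex Asymptotics
open scoped Topology BigOperators

noncomputable section

lemma one_mem_sector {α : ℝ} (hα : 0 < α) : (1:ℂ) ∈ Sector α := by
  refine ⟨one_ne_zero, ?_⟩
  rw [Complex.arg_one]
  simp only [abs_zero]
  have := Real.pi_pos
  positivity

lemma sector_neBot {α : ℝ} (hα : 0 < α) : (nhdsWithin (0:ℂ) (Sector α)).NeBot := by
  rw [← mem_closure_iff_nhdsWithin_neBot]
  have h1 : Filter.Tendsto (fun n : ℕ => ((1 / ((n:ℝ)+1) : ℝ) : ℂ)) atTop (nhds 0) := by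
    have h0 : Filter.Tendsto (fun n : ℕ => (1 / ((n:ℝ)+1) : ℝ)) atTop (nhds 0) :=
      tendsto_one_div_add_atTop_nhds_zero_nat
    have := (Complex.continuous_ofReal.tendsto 0).comp h0
    rw [Complex.ofReal_zero] at this
    exact this
  refine mem_closure_of_tendsto h1 ?_
  filter_upwards with n
  have hpos : (0:ℝ) < 1 / ((n:ℝ)+1) := by positivity
  refine ⟨Complex.ofReal_ne_zero.mpr hpos.ne', ?_⟩
  rw [Complex.arg_ofReal_of_nonneg hpos.le]
  simp only [abs_zero]
  have := Real.pi_pos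
  positivity

/-- conditions implying that `f` is characteristic in `A_{{L}}(S_α)`. -/
theorem stmt_2 (L : ℕ → ℝ) (hLpos : ∀ j, 0 < L j) (hL0 : L 0 = 1)
    (α : ℝ) (hα : 0 < α) (hα2 : α ≤ 2)
    (f : ℂ → ℂ) (hf : f ∈ ASet L α)
    (c : ℕ → ℂ)
    (hc : ∀ j : ℕ, Filter.Tendsto (iteratedDerivWithin j f (Sector α))
      (nhdsWithin 0 (Sector α)) (nhds (c j))) :
    (SeqEquiv (fun j => ‖c j‖) L →
      SeqEquiv (fun j => ⨆ z : Sector α, ‖iteratedDerivWithin j f (Sector α) (z:ℂ)‖) L) ∧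
    (SeqEquiv (fun j => ⨆ z : Sector α, ‖iteratedDerivWithin j f (Sector α) (z:ℂ)‖) L →
      Characteristic L α f) := by
  have h1S : (1:ℂ) ∈ Sector α := one_mem_sector hα
  haveI : Nonempty ↥(Sector α) := ⟨⟨1, h1S⟩⟩
  haveI := sector_neBot hα
  set Cj : ℕ → ℝ :=
    fun j => ⨆ z : Sector α, ‖iteratedDerivWithin j f (Sector α) (z:ℂ)‖ with hCjdef
  obtain ⟨hfd, h, hh, C, hC⟩ := hf
  have hBdd : ∀ j, BddAbove (Set.range fun z : Sector α =>
      ‖iteratedDerivWithin j f (Sector α) (z:ℂ)‖) :=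
    fun j => ⟨C * h ^ j * L j, by rintro x ⟨z, rfl⟩; exact hC j z z.2⟩
  have hCjnn : ∀ j, 0 ≤ Cj j := fun j => Real.iSup_nonneg fun z => norm_nonneg _
  have hCjle : ∀ j, Cj j ≤ C * h ^ j * L j := fun j => ciSup_le fun z => hC j z z.2
  have hcle : ∀ j, ‖c j‖ ≤ Cj j := by
    intro j
    refine le_of_tendsto ((hc j).norm) ?_
    filter_upwards [eventually_mem_nhdsWithin] with z hz
    exact le_ciSup (hBdd j) ⟨z, hz⟩
  constructor
  · rintro ⟨A, hA, B, hB, hAB⟩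
    refine ⟨max (max C 1) A, by positivity, max (max h 1) B, by positivity,
      fun j => ⟨?_, ?_⟩⟩
    · refine (hCjle j).trans ?_
      have h1 : C * h ^ j ≤ max (max C 1) A * (max (max h 1) B) ^ j := by
        have hc1 : C ≤ max (max C 1) A := le_trans (le_max_left _ _) (le_max_left _ _)
        have hh1 : h ^ j ≤ (max (max h 1) B) ^ j := by
          apply pow_le_pow_left₀ hh.le
          exact le_trans (le_max_left _ _) (le_max_left _ _)
        calc C * h ^ j ≤ max (max C 1) A * h ^ j := by
              apply mul_le_mul_of_nonneg_right hc1 (by positivity)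
          _ ≤ max (max C 1) A * (max (max h 1) B) ^ j := by
              apply mul_le_mul_of_nonneg_left hh1 (by positivity)
      exact mul_le_mul_of_nonneg_right h1 (hLpos j).le
    · have h2 : L j ≤ A * B ^ j * Cj j :=
        le_trans (hAB j).2 (mul_le_mul_of_nonneg_left (hcle j) (by positivity))
      refine h2.trans ?_
      have h3 : A * B ^ j ≤ max (max C 1) A * (max (max h 1) B) ^ j := by
        apply mul_le_mul (le_max_right _ _) (pow_le_pow_left₀ hB.le (le_max_right _ _) j)
          (by positivity) (by positivity)
      exact mul_le_mul_of_nonneg_right h3 (hCjnn j)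
  · rintro ⟨A, hA, B, hB, hAB⟩
    refine ⟨⟨hfd, h, hh, C, hC⟩, ?_⟩
    intro N hN hN0 hfN hsub
    refine le_antisymm hsub ?_
    rintro g ⟨hgd, s, hs, D, hD⟩
    obtain ⟨hfd2, t, ht, E, hE⟩ := hfN
    have hCjN : ∀ j, Cj j ≤ E * t ^ j * N j := fun j => ciSup_le fun z => hE j z z.2
    have hE0 : 0 ≤ E := by
      have h1 := (hCjnn 0).trans (hCjN 0)
      simpa [hN0] using h1
    have hLN : ∀ j, L j ≤ A * B ^ j * (E * t ^ j * N j) := fun j =>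
      le_trans (hAB j).2 (mul_le_mul_of_nonneg_left (hCjN j) (by positivity))
    refine ⟨hgd, s * B * t, by positivity, max D 0 * A * E, ?_⟩
    intro j z hz
    calc ‖iteratedDerivWithin j g (Sector α) z‖ ≤ D * s ^ j * L j := hD j z hz
      _ ≤ max D 0 * s ^ j * L j := by
          apply mul_le_mul_of_nonneg_right _ (hLpos j).le
          exact mul_le_mul_of_nonneg_right (le_max_left _ _) (by positivity)
      _ ≤ max D 0 * s ^ j * (A * B ^ j * (E * t ^ j * N j)) :=
          mul_le_mul_of_nonneg_left (hLN j) (by positivity)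
      _ = max D 0 * A * E * (s * B * t) ^ j * N j := by ring
end
end

section
/- Let M be a sequence of positive reals with M₀ = 1, set m_j := M_{j+1}/M_j, and define R_j := ∑_{n=0}^∞ 2^{-n}·(M_n/m_n^n)·m_n^j ∈ (0,∞] for j ∈ ℕ₀. Then R_j ≥ M_j/2^j for all j ∈ ℕ₀. If moreover M is log-convex, then each series defining R_j converges and R_j ≤ 2·M_j for all j ∈ ℕ₀; consequently (R_j)_j is equivalent to M. -/
open Filter Complex Asymptotics
open scoped Topology BigOperators

noncomputable section

/-
For log-convex `M` the quotients `m_n = M_{n+1}/M_n` increase, so for fixed `n` the sequence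
`k ↦ M_k / m_n^k` is nonincreasing up to `k = n` and nondecreasing afterwards: it is minimal at
`k = n`. Hence the `n`-th term `2^{-n} (M_n / m_n^n) m_n^j` of `R_j` is at most `2^{-n} M_j`,
which sums to `2 M_j`; and the `j`-th term alone equals `M_j / 2^j`.
-/

open Finset

section Transform

variable {M : ℕ → ℝ}

lemma quotSeq_pos (hM : ∀ j, 0 < M j) (n : ℕ) : 0 < quotSeq M n :=
  div_pos (hM _) (hM _)

lemma mul_quotSeq (hM : ∀ j, 0 < M j) (n : ℕ) : M n * quotSeq M n = M (n + 1) :=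
  mul_div_cancel₀ _ (hM n).ne'

lemma eq_mul_prod_quotSeq (hM : ∀ j, 0 < M j) (n k : ℕ) :
    M (n + k) = M n * ∏ i ∈ range k, quotSeq M (n + i) := by
  induction k with
  | zero => simp
  | succ k ih => rw [prod_range_succ, ← mul_assoc, ← ih, mul_quotSeq hM, add_assoc]

lemma IsLogConvexSeq.monotone_quotSeq (hM : ∀ j, 0 < M j) (hlc : IsLogConvexSeq M) :
    Monotone (quotSeq M) := by
  refine monotone_nat_of_le_succ fun n => ?_
  rw [quotSeq, quotSeq, div_le_div_iff₀ (hM n) (hM (n + 1))]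
  nlinarith [hlc n]

lemma IsLogConvexSeq.mul_quotSeq_pow_le (hM : ∀ j, 0 < M j) (hlc : IsLogConvexSeq M)
    (n k : ℕ) : M n * quotSeq M n ^ k ≤ M (n + k) := by
  rw [eq_mul_prod_quotSeq hM]
  refine mul_le_mul_of_nonneg_left ?_ (hM n).le
  calc quotSeq M n ^ k = ∏ _i ∈ range k, quotSeq M n := by simp
    _ ≤ ∏ i ∈ range k, quotSeq M (n + i) :=
      prod_le_prod (fun _ _ => (quotSeq_pos hM n).le)
        fun i _ => hlc.monotone_quotSeq hM (Nat.le_add_right n i)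

lemma IsLogConvexSeq.le_mul_quotSeq_pow (hM : ∀ j, 0 < M j) (hlc : IsLogConvexSeq M)
    (n k : ℕ) : M (n + k) ≤ M n * quotSeq M (n + k) ^ k := by
  rw [eq_mul_prod_quotSeq hM]
  refine mul_le_mul_of_nonneg_left ?_ (hM n).le
  calc ∏ i ∈ range k, quotSeq M (n + i) ≤ ∏ _i ∈ range k, quotSeq M (n + k) :=
        prod_le_prod (fun i _ => (quotSeq_pos hM (n + i)).le)
          fun i hi => hlc.monotone_quotSeq hM (by simp at hi; omega)
    _ = quotSeq M (n + k) ^ k := by simp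

lemma IsLogConvexSeq.mul_quotSeq_pow_le_mul (hM : ∀ j, 0 < M j) (hlc : IsLogConvexSeq M)
    (n j : ℕ) : M n * quotSeq M n ^ j ≤ M j * quotSeq M n ^ n := by
  have hm := (quotSeq_pos hM n).le
  rcases le_total n j with hnj | hjn
  · obtain ⟨k, rfl⟩ := Nat.exists_eq_add_of_le hnj
    rw [pow_add, mul_left_comm, mul_comm]
    exact mul_le_mul_of_nonneg_right (hlc.mul_quotSeq_pow_le hM n k) (pow_nonneg hm n)
  · obtain ⟨k, rfl⟩ := Nat.exists_eq_add_of_le hjn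
    rw [pow_add, ← mul_assoc, mul_right_comm]
    exact mul_le_mul_of_nonneg_right (hlc.le_mul_quotSeq_pow hM j k) (pow_nonneg hm j)

lemma coefT_mul_quotSeq_pow (n j : ℕ) :
    coefT M n * quotSeq M n ^ j = (1 / 2 : ℝ) ^ n * (M n * quotSeq M n ^ j / quotSeq M n ^ n) := by
  rw [coefT, quotSeq]
  ring

lemma coefT_mul_quotSeq_pow_pos (hM : ∀ j, 0 < M j) (n j : ℕ) :
    0 < coefT M n * quotSeq M n ^ j := by
  have := hM n
  have := quotSeq_pos hM n
  rw [coefT_mul_quotSeq_pow]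
  positivity

lemma coefT_mul_quotSeq_pow_self (hM : ∀ j, 0 < M j) (j : ℕ) :
    coefT M j * quotSeq M j ^ j = M j / 2 ^ j := by
  rw [coefT_mul_quotSeq_pow, mul_div_cancel_right₀ _ (pow_ne_zero j (quotSeq_pos hM j).ne'),
    one_div_pow, one_div_mul_eq_div]

lemma IsLogConvexSeq.coefT_mul_quotSeq_pow_le (hM : ∀ j, 0 < M j) (hlc : IsLogConvexSeq M)
    (n j : ℕ) : coefT M n * quotSeq M n ^ j ≤ (1 / 2 : ℝ) ^ n * M j := by
  rw [coefT_mul_quotSeq_pow]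
  gcongr
  rw [div_le_iff₀ (pow_pos (quotSeq_pos hM n) n)]
  exact hlc.mul_quotSeq_pow_le_mul hM n j

lemma summable_geometric_half_mul (c : ℝ) : Summable fun n : ℕ => (1 / 2 : ℝ) ^ n * c :=
  (summable_geometric_of_lt_one (by norm_num) (by norm_num)).mul_right c

lemma IsLogConvexSeq.summable_coefT_mul_quotSeq_pow (hM : ∀ j, 0 < M j)
    (hlc : IsLogConvexSeq M) (j : ℕ) :
    Summable fun n => coefT M n * quotSeq M n ^ j :=
  (summable_geometric_half_mul (M j)).of_nonneg_of_le
    (fun n => (coefT_mul_quotSeq_pow_pos hM n j).le) (fun n => hlc.coefT_mul_quotSeq_pow_le hM n j)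

lemma IsLogConvexSeq.Rseq_le (hM : ∀ j, 0 < M j) (hlc : IsLogConvexSeq M) (j : ℕ) :
    Rseq M j ≤ 2 * M j :=
  calc Rseq M j ≤ ∑' n : ℕ, (1 / 2 : ℝ) ^ n * M j :=
        (hlc.summable_coefT_mul_quotSeq_pow hM j).tsum_le_tsum
          (fun n => hlc.coefT_mul_quotSeq_pow_le hM n j) (summable_geometric_half_mul (M j))
    _ = 2 * M j := by
        rw [tsum_mul_right, tsum_geometric_of_lt_one (by norm_num) (by norm_num)]
        norm_num

lemma IsLogConvexSeq.le_Rseq (hM : ∀ j, 0 < M j) (hlc : IsLogConvexSeq M) (j : ℕ) :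
    M j / 2 ^ j ≤ Rseq M j := by
  rw [← coefT_mul_quotSeq_pow_self hM j]
  exact (hlc.summable_coefT_mul_quotSeq_pow hM j).le_tsum j
    fun n _ => (coefT_mul_quotSeq_pow_pos hM n j).le

end Transform

lemma seqEquiv_of_div_two_pow_le_of_le_two_mul {a b : ℕ → ℝ} (hb : ∀ j, 0 ≤ b j)
    (hlow : ∀ j, b j / 2 ^ j ≤ a j) (hup : ∀ j, a j ≤ 2 * b j) : SeqEquiv a b := by
  refine ⟨2, two_pos, 2, two_pos, fun j => ⟨?_, ?_⟩⟩
  · calc a j ≤ 2 * b j := hup j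
      _ ≤ 2 * 2 ^ j * b j := by
        have := one_le_pow₀ (M₀ := ℝ) (n := j) one_le_two
        nlinarith [hb j]
  · have h2j : (0 : ℝ) < 2 ^ j := by positivity
    have := (div_le_iff₀ h2j).1 (hlow j)
    nlinarith [hb j]

theorem stmt_3_general (M : ℕ → ℝ) (hMpos : ∀ j, 0 < M j) :
    (∀ j : ℕ,
      ENNReal.ofReal (M j / 2 ^ j) ≤
        ∑' n : ℕ, ENNReal.ofReal (coefT M n * (quotSeq M n) ^ j)) ∧
    (IsLogConvexSeq M →
      (∀ j : ℕ, Summable (fun n : ℕ => coefT M n * (quotSeq M n) ^ j)) ∧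
      (∀ j : ℕ, Rseq M j ≤ 2 * M j) ∧
      SeqEquiv (Rseq M) M) := by
  refine ⟨fun j => ?_, fun hlc => ⟨hlc.summable_coefT_mul_quotSeq_pow hMpos,
    hlc.Rseq_le hMpos, ?_⟩⟩
  · rw [← coefT_mul_quotSeq_pow_self hMpos j]
    exact ENNReal.le_tsum (f := fun n => ENNReal.ofReal (coefT M n * quotSeq M n ^ j)) j
  · exact seqEquiv_of_div_two_pow_le_of_le_two_mul (fun j => (hMpos j).le)
      (hlc.le_Rseq hMpos) (hlc.Rseq_le hMpos)

/-- lower and (under log-convexity) upper bounds for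
`R_j = ∑_n 2^{-n}(M_n/m_n^n) m_n^j`; under log-convexity `(R_j)` is equivalent to `M`. -/
theorem stmt_3 (M : ℕ → ℝ) (hMpos : ∀ j, 0 < M j) (hM0 : M 0 = 1) :
    (∀ j : ℕ,
      ENNReal.ofReal (M j / 2 ^ j) ≤
        ∑' n : ℕ, ENNReal.ofReal (coefT M n * (quotSeq M n) ^ j)) ∧
    (IsLogConvexSeq M →
      (∀ j : ℕ, Summable (fun n : ℕ => coefT M n * (quotSeq M n) ^ j)) ∧
      (∀ j : ℕ, Rseq M j ≤ 2 * M j) ∧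
      SeqEquiv (Rseq M) M) :=
  stmt_3_general M hMpos
end
end

section
/- Let ω ∈ W₀ with associated weight matrix 𝓜_ω = {W^{(ℓ)} : ℓ > 0}, where W^{(ℓ)}_j := exp((1/ℓ)·φ*_ω(ℓj)). Then 𝓜_ω satisfies (𝓜_{rai}) if and only if ω satisfies condition (α₀). -/
open Filter Complex Asymptotics
open scoped Topology BigOperators

noncomputable section

section AuxStmt13

variable {ω : ℝ → ℝ}

lemma InW0.omega_nonneg (hω : InW0 ω) {t : ℝ} (ht : 0 ≤ t) : 0 ≤ ω t :=
  hω.1.2.2.2.1 t ht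

lemma InW0.omega_one (hω : InW0 ω) : ω 1 = 0 :=
  hω.2.1 1 ⟨zero_le_one, le_rfl⟩

lemma InW0.phi_mono (hω : InW0 ω) {a b : ℝ} (hab : a ≤ b) :
    ω (Real.exp a) ≤ ω (Real.exp b) :=
  hω.1.2.1 (Set.mem_Ici.2 (Real.exp_pos a).le) (Set.mem_Ici.2 (Real.exp_pos b).le)
    (Real.exp_le_exp.2 hab)

lemma InW0.exists_log_le (hω : InW0 ω) {c : ℝ} (hc : 0 < c) :
    ∃ T : ℝ, 1 ≤ T ∧ ∀ t ≥ T, Real.log t ≤ c * ω t := by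
  have h3 : Om3 ω := hω.2.2.1
  rw [Om3, Asymptotics.isLittleO_iff] at h3
  obtain ⟨T', hT'⟩ := Filter.eventually_atTop.1 (h3 hc)
  refine ⟨max T' 1, le_max_right _ _, fun t ht => ?_⟩
  have h1 : (1:ℝ) ≤ t := le_trans (le_max_right _ _) ht
  have := hT' t (le_trans (le_max_left _ _) ht)
  have hωt : 0 ≤ ω t := hω.omega_nonneg (by linarith)
  calc Real.log t ≤ ‖Real.log t‖ := le_abs_self _
    _ ≤ c * ‖ω t‖ := this
    _ = c * ω t := by rw [Real.norm_eq_abs, _root_.abs_of_nonneg hωt]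

lemma InW0.S_bddAbove (hω : InW0 ω) (x : ℝ) :
    BddAbove {r : ℝ | ∃ y : ℝ, 0 ≤ y ∧ r = x * y - ω (Real.exp y)} := by
  obtain ⟨T, hT1, hT⟩ := hω.exists_log_le (c := 1 / (|x| + 1)) (by positivity)
  refine ⟨|x| * Real.log T, ?_⟩
  rintro r ⟨y, hy, rfl⟩
  have hlogT : 0 ≤ Real.log T := Real.log_nonneg hT1
  by_cases hyT : y ≤ Real.log T
  · have hxy : x * y ≤ |x| * y := mul_le_mul_of_nonneg_right (le_abs_self x) hy
    have hωy : 0 ≤ ω (Real.exp y) := hω.omega_nonneg (Real.exp_pos y).le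
    have : |x| * y ≤ |x| * Real.log T := mul_le_mul_of_nonneg_left hyT (abs_nonneg x)
    linarith
  · push_neg at hyT
    have hTe : T ≤ Real.exp y := by
      have := Real.exp_lt_exp.2 hyT
      rw [Real.exp_log (by linarith : (0:ℝ) < T)] at this
      exact this.le
    have := hT (Real.exp y) hTe
    rw [Real.log_exp] at this
    have hpos : (0:ℝ) < |x| + 1 := by positivity
    have hω' : (|x| + 1) * y ≤ ω (Real.exp y) := by
      rw [div_mul_eq_mul_div, le_div_iff₀ hpos] at this
      · linarith [mul_comm y (|x| + 1)]
    have hxy : x * y ≤ |x| * y := mul_le_mul_of_nonneg_right (le_abs_self x) hy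
    nlinarith

lemma InW0.phiStar_ge (hω : InW0 ω) (x : ℝ) {y : ℝ} (hy : 0 ≤ y) :
    x * y - ω (Real.exp y) ≤ phiStar ω x :=
  le_csSup (hω.S_bddAbove x) ⟨y, hy, rfl⟩

lemma phiStar_le_of (hω : InW0 ω) {x M : ℝ}
    (h : ∀ y : ℝ, 0 ≤ y → x * y - ω (Real.exp y) ≤ M) : phiStar ω x ≤ M := by
  refine csSup_le ⟨x * 0 - ω (Real.exp 0), 0, le_rfl, rfl⟩ ?_
  rintro r ⟨y, hy, rfl⟩
  exact h y hy

lemma InW0.phiStar_nonneg (hω : InW0 ω) (x : ℝ) : 0 ≤ phiStar ω x := by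
  have := hω.phiStar_ge x (y := 0) le_rfl
  rw [Real.exp_zero, hω.omega_one, mul_zero, sub_zero] at this
  exact this

/-- monotonicity of `x ↦ φ*(x)/x`. -/
lemma InW0.phiStar_div_mono (hω : InW0 ω) {x₁ x₂ : ℝ} (h1 : 0 < x₁) (h12 : x₁ ≤ x₂) :
    phiStar ω x₁ / x₁ ≤ phiStar ω x₂ / x₂ := by
  have h2 : 0 < x₂ := lt_of_lt_of_le h1 h12
  rw [div_le_div_iff₀ h1 h2]
  have key : phiStar ω x₁ ≤ (x₁ / x₂) * phiStar ω x₂ := by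
    refine phiStar_le_of hω fun y hy => ?_
    have hel : x₂ * y - ω (Real.exp y) ≤ phiStar ω x₂ := hω.phiStar_ge x₂ hy
    have hωy : 0 ≤ ω (Real.exp y) := hω.omega_nonneg (Real.exp_pos y).le
    have : (x₁ / x₂) * (x₂ * y - ω (Real.exp y)) ≤ (x₁ / x₂) * phiStar ω x₂ :=
      mul_le_mul_of_nonneg_left hel (by positivity)
    have hexp : (x₁ / x₂) * (x₂ * y) = x₁ * y := by field_simp
    nlinarith [mul_le_mul_of_nonneg_right (div_le_one_of_le₀ h12 h2.le) hωy]
  calc phiStar ω x₁ * x₂ ≤ ((x₁ / x₂) * phiStar ω x₂) * x₂ :=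
        mul_le_mul_of_nonneg_right key h2.le
    _ = phiStar ω x₂ * x₁ := by field_simp

lemma log_factorial_le (j : ℕ) : Real.log ((Nat.factorial j)) ≤ j * Real.log j := by
  have h : ((Nat.factorial j : ℕ) : ℝ) ≤ ((j : ℝ)) ^ j := by
    exact_mod_cast Nat.factorial_le_pow j
  calc Real.log ((Nat.factorial j)) ≤ Real.log ((j : ℝ) ^ j) :=
        Real.log_le_log (by exact_mod_cast j.factorial_pos) h
    _ = j * Real.log j := Real.log_pow j j

lemma le_log_factorial (j : ℕ) : j * Real.log j - j ≤ Real.log ((Nat.factorial j)) := by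
  have h : ((j : ℝ)) ^ j / ((Nat.factorial j) : ℝ) ≤ Real.exp j :=
    Real.pow_div_factorial_le_exp (x := (j : ℝ)) (by positivity) j
  have hfac : (0:ℝ) < ((Nat.factorial j) : ℝ) := by exact_mod_cast j.factorial_pos
  have h2 : ((j : ℝ)) ^ j ≤ Real.exp j * ((Nat.factorial j) : ℝ) := by
    rw [div_le_iff₀ hfac] at h; linarith
  have hpj : (0:ℝ) < (j : ℝ) ^ j := by
    rcases Nat.eq_zero_or_pos j with h0 | h0
    · simp [h0]
    · have : (0:ℝ) < (j:ℝ) := by exact_mod_cast h0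
      positivity
  have h3 : Real.log ((j : ℝ) ^ j) ≤ Real.log (Real.exp j * ((Nat.factorial j) : ℝ)) :=
    Real.log_le_log hpj h2
  rw [Real.log_pow, Real.log_mul (Real.exp_ne_zero _) (ne_of_gt hfac),
    Real.log_exp] at h3
  linarith

lemma check_rpow (hω : InW0 ω) {p : ℝ} (hp : 0 < p) {j : ℕ} (hj : 1 ≤ j) :
    (checkSeq (Wmat ω p) j) ^ ((j : ℝ)⁻¹) =
      Real.exp (phiStar ω (p * j) / (p * j) - Real.log ((Nat.factorial j)) / j) := by
  have hj0 : (0:ℝ) < j := by exact_mod_cast hj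
  have hfac : (0:ℝ) < ((Nat.factorial j) : ℝ) := by exact_mod_cast j.factorial_pos
  have h1 : checkSeq (Wmat ω p) j =
      Real.exp (1 / p * phiStar ω (p * j) - Real.log ((Nat.factorial j))) := by
    rw [checkSeq, Wmat, Real.exp_sub, Real.exp_log hfac]
  rw [h1, ← Real.exp_mul]
  congr 1
  field_simp

set_option maxHeartbeats 2000000 in
lemma mrai_of_alpha0 (hω : InW0 ω) (h : Alpha0 ω) : Mrai (Wmat ω) := by
  obtain ⟨C₀, hC₀, t₀, ht₀, hα⟩ := h
  intro p hp
  have hC₀0 : (0:ℝ) < C₀ := lt_of_lt_of_le one_pos hC₀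
  set t₁ : ℝ := max t₀ 1 with ht₁def
  have ht₁1 : (1:ℝ) ≤ t₁ := le_max_right _ _
  have ht₁0 : (0:ℝ) < t₁ := lt_of_lt_of_le one_pos ht₁1
  have hα1 : ∀ lam ≥ (1:ℝ), ∀ t ≥ t₁, ω (lam * t) ≤ C₀ * lam * ω t :=
    fun lam hl t ht => hα lam hl t (le_trans (le_max_left _ _) ht)
  set y₀ : ℝ := Real.log t₁ with hy₀def
  have hy₀0 : 0 ≤ y₀ := Real.log_nonneg ht₁1
  have hexpy₀ : Real.exp y₀ = t₁ := Real.exp_log ht₁0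
  set D : ℝ := ω t₁ / p with hDdef
  have hD0 : 0 ≤ D := div_nonneg (hω.omega_nonneg ht₁0.le) hp.le
  refine ⟨Real.exp (D + 1), Real.exp_pos _, C₀ * p, by positivity, ?_⟩
  intro j k hj hjk
  have hk : 1 ≤ k := le_trans hj hjk
  have hj0 : (0:ℝ) < (j:ℝ) := by exact_mod_cast hj
  have hk0 : (0:ℝ) < (k:ℝ) := by exact_mod_cast hk
  have hjk' : (j:ℝ) ≤ (k:ℝ) := by exact_mod_cast hjk
  have hpj : (0:ℝ) < p * j := by positivity
  have hpk : (0:ℝ) < C₀ * p * k := by positivity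
  set lam : ℝ := (k:ℝ) / j with hlamdef
  have hlam1 : (1:ℝ) ≤ lam := (one_le_div hj0).2 hjk'
  have hlam0 : (0:ℝ) < lam := lt_of_lt_of_le one_pos hlam1
  have hloglam : Real.log lam = Real.log k - Real.log j :=
    Real.log_div (ne_of_gt hk0) (ne_of_gt hj0)
  have hloglam0 : 0 ≤ Real.log lam := Real.log_nonneg hlam1
  set G' : ℝ := phiStar ω (C₀ * p * k) / (C₀ * p * k) with hG'def
  have hG : phiStar ω (p * j) / (p * j) ≤ D + G' + Real.log j - Real.log k := by
    rw [div_le_iff₀ hpj]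
    refine phiStar_le_of hω fun y hy => ?_
    have hωy : 0 ≤ ω (Real.exp y) := hω.omega_nonneg (Real.exp_pos y).le
    by_cases hyy : y₀ ≤ y
    · have ht : Real.exp y ≥ t₁ := by rw [← hexpy₀]; exact Real.exp_le_exp.2 hyy
      have hαt := hα1 lam hlam1 (Real.exp y) ht
      have hel : (C₀*p*k) * (y + Real.log lam) - ω (Real.exp (y + Real.log lam))
          ≤ phiStar ω (C₀*p*k) := hω.phiStar_ge _ (by linarith)
      have hexp2 : Real.exp (y + Real.log lam) = lam * Real.exp y := by
        rw [Real.exp_add, Real.exp_log hlam0]; ring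
      rw [hexp2] at hel
      have hid : ω (Real.exp y) / (p*j) * (C₀*p*k) = C₀ * lam * ω (Real.exp y) := by
        rw [hlamdef]; field_simp
      have hkey : y + Real.log lam - ω (Real.exp y)/(p*j) ≤ G' := by
        rw [hG'def, le_div_iff₀ hpk]
        have hexpand : (y + Real.log lam - ω (Real.exp y)/(p*j)) * (C₀*p*k)
            = (C₀*p*k)*(y + Real.log lam) - C₀*lam*ω (Real.exp y) := by
          rw [← hid]; ring
        rw [hexpand]; linarith
      have hle : y - ω (Real.exp y) / (p*j) ≤ D + G' + Real.log j - Real.log k := by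
        rw [hloglam] at hkey; linarith
      have h2 := mul_le_mul_of_nonneg_right hle hpj.le
      have h3 : (y - ω (Real.exp y) / (p*j)) * (p*j) = p*j*y - ω (Real.exp y) := by
        field_simp
      rw [h3] at h2; linarith
    · push_neg at hyy
      have hel : (C₀*p*k) * (y₀ + Real.log lam) - ω (Real.exp (y₀ + Real.log lam))
          ≤ phiStar ω (C₀*p*k) := hω.phiStar_ge _ (by linarith)
      have hexp2 : Real.exp (y₀ + Real.log lam) = lam * t₁ := by
        rw [Real.exp_add, Real.exp_log hlam0, hexpy₀]; ring
      rw [hexp2] at hel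
      have hαt := hα1 lam hlam1 t₁ le_rfl
      have hωt₁ : 0 ≤ ω t₁ := hω.omega_nonneg ht₁0.le
      have hid : ω t₁ / (p*j) * (C₀*p*k) = C₀ * lam * ω t₁ := by
        rw [hlamdef]; field_simp
      have hkey : y₀ + Real.log lam - ω t₁/(p*j) ≤ G' := by
        rw [hG'def, le_div_iff₀ hpk]
        have hexpand : (y₀ + Real.log lam - ω t₁/(p*j)) * (C₀*p*k)
            = (C₀*p*k)*(y₀ + Real.log lam) - C₀*lam*ω t₁ := by
          rw [← hid]; ring
        rw [hexpand]; linarith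
      have hj1 : (1:ℝ) ≤ (j:ℝ) := by exact_mod_cast hj
      have hDj : ω t₁/(p*j) ≤ D := by
        rw [hDdef, div_le_div_iff₀ hpj hp]
        nlinarith [mul_nonneg (mul_nonneg hωt₁ hp.le) (by linarith : (0:ℝ) ≤ (j:ℝ) - 1)]
      have hy₀le : y₀ ≤ D + G' + Real.log j - Real.log k := by
        rw [hloglam] at hkey; linarith
      have h2 := mul_le_mul_of_nonneg_right hy₀le hpj.le
      have h4 : p*(j:ℝ)*y ≤ p*(j:ℝ)*y₀ := mul_le_mul_of_nonneg_left hyy.le hpj.le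
      have h5 : y₀*(p*(j:ℝ)) = p*(j:ℝ)*y₀ := by ring
      linarith
  rw [check_rpow hω hp hj, check_rpow hω (by positivity : (0:ℝ) < C₀*p) hk, ← Real.exp_add,
    Real.exp_le_exp]
  have hfj : Real.log j - 1 ≤ Real.log (Nat.factorial j) / j := by
    rw [le_div_iff₀ hj0]; nlinarith [le_log_factorial j]
  have hfk : Real.log (Nat.factorial k) / k ≤ Real.log k := by
    rw [div_le_iff₀ hk0]; nlinarith [log_factorial_le k]
  linarith [hG]

lemma InW0.exists_subgradient (hω : InW0 ω) (Z : ℝ) :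
    ∃ x₀ : ℝ, ∀ y : ℝ, ω (Real.exp Z) + x₀ * (y - Z) ≤ ω (Real.exp y) := by
  have hf : ConvexOn ℝ Set.univ (fun t => ω (Real.exp t)) := hω.2.2.2
  set f : ℝ → ℝ := fun t => ω (Real.exp t) with hfdef
  set S : Set ℝ := {s | ∃ w : ℝ, Z < w ∧ s = (f w - f Z) / (w - Z)} with hS
  have hne : S.Nonempty := ⟨(f (Z+1) - f Z) / (Z + 1 - Z), Z + 1, by linarith, rfl⟩
  have hlb : ∀ s ∈ S, (f Z - f (Z-1)) / (Z - (Z-1)) ≤ s := by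
    rintro s ⟨w, hw, rfl⟩
    exact hf.slope_mono_adjacent (Set.mem_univ _) (Set.mem_univ _) (by linarith) hw
  have hbd : BddBelow S := ⟨_, hlb⟩
  refine ⟨sInf S, fun y => ?_⟩
  show f Z + sInf S * (y - Z) ≤ f y
  rcases lt_trichotomy y Z with h | h | h
  · have h1 : (f Z - f y) / (Z - y) ≤ sInf S := by
      apply le_csInf hne
      rintro s ⟨w, hw, rfl⟩
      exact hf.slope_mono_adjacent (Set.mem_univ _) (Set.mem_univ _) h hw
    rw [div_le_iff₀ (by linarith : (0:ℝ) < Z - y)] at h1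
    have hr : sInf S * (y - Z) = -(sInf S * (Z - y)) := by ring
    linarith only [h1, hr]
  · rw [h]; simp
  · have h1 : sInf S ≤ (f y - f Z) / (y - Z) := csInf_le hbd ⟨y, h, rfl⟩
    rw [le_div_iff₀ (by linarith : (0:ℝ) < y - Z)] at h1
    linarith only [h1]

set_option maxHeartbeats 2000000 in
lemma alpha0_of_mrai (hω : InW0 ω) (h : Mrai (Wmat ω)) : Alpha0 ω := by
  obtain ⟨C, hC, p', hp', hkey⟩ := h 1 one_pos
  set ℓ : ℝ := max p' 1 with hℓdef
  have hℓ1 : (1:ℝ) ≤ ℓ := le_max_right _ _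
  have hℓ0 : (0:ℝ) < ℓ := lt_of_lt_of_le one_pos hℓ1
  set A : ℝ := Real.log (max C 1) + 1 with hAdef
  have hA1 : (1:ℝ) ≤ A := by
    have : 0 ≤ Real.log (max C 1) := Real.log_nonneg (le_max_right _ _)
    linarith
  -- discrete rai inequality at level 1
  have hdisc : ∀ j k : ℕ, 1 ≤ j → j ≤ k →
      phiStar ω j / j ≤ A + phiStar ω (ℓ*k)/(ℓ*k) + Real.log j - Real.log k := by
    intro j k hj hjk
    have hk := le_trans hj hjk
    have hj0 : (0:ℝ) < (j:ℝ) := by exact_mod_cast hj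
    have hk0 : (0:ℝ) < (k:ℝ) := by exact_mod_cast hk
    have h1 := hkey j k hj hjk
    rw [check_rpow hω one_pos hj, check_rpow hω hp' hk] at h1
    have h2 : Real.exp (phiStar ω (1*(j:ℝ))/(1*(j:ℝ)) - Real.log (Nat.factorial j)/j)
        ≤ Real.exp (Real.log (max C 1)
            + (phiStar ω (ℓ*(k:ℝ))/(ℓ*(k:ℝ)) - Real.log (Nat.factorial k)/k)) := by
      refine le_trans h1 ?_
      rw [Real.exp_add]
      have hCle : C ≤ Real.exp (Real.log (max C 1)) := by
        rw [Real.exp_log (lt_of_lt_of_le one_pos (le_max_right _ _))]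
        exact le_max_left _ _
      have hmono : phiStar ω (p'*(k:ℝ))/(p'*(k:ℝ)) ≤ phiStar ω (ℓ*(k:ℝ))/(ℓ*(k:ℝ)) :=
        hω.phiStar_div_mono (by positivity)
          (mul_le_mul_of_nonneg_right (le_max_left p' 1) hk0.le)
      have h3 : Real.exp (phiStar ω (p'*(k:ℝ))/(p'*(k:ℝ)) - Real.log (Nat.factorial k)/k)
          ≤ Real.exp (phiStar ω (ℓ*(k:ℝ))/(ℓ*(k:ℝ)) - Real.log (Nat.factorial k)/k) := by
        rw [Real.exp_le_exp]; linarith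
      exact mul_le_mul hCle h3 (Real.exp_pos _).le (Real.exp_pos _).le
    rw [Real.exp_le_exp] at h2
    have hfj : Real.log (Nat.factorial j) / j ≤ Real.log j := by
      rw [div_le_iff₀ hj0]; nlinarith [log_factorial_le j]
    have hfk : Real.log k - 1 ≤ Real.log (Nat.factorial k) / k := by
      rw [le_div_iff₀ hk0]; nlinarith [le_log_factorial k]
    rw [one_mul] at h2
    linarith
  have hlog4 : (0:ℝ) ≤ Real.log 4 := Real.log_nonneg (by norm_num)
  set A₂ : ℝ := A + Real.log 4 with hA₂def
  have hA₂1 : (1:ℝ) ≤ A₂ := by rw [hA₂def]; linarith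
  -- continuous rai inequality
  have hcont : ∀ u v : ℝ, 1 ≤ u → u ≤ v →
      phiStar ω u / u ≤ A₂ + phiStar ω (ℓ*v)/(ℓ*v) + Real.log u - Real.log v := by
    intro u v hu huv
    have hu0 : (0:ℝ) < u := lt_of_lt_of_le one_pos hu
    have hv0 : (0:ℝ) < v := lt_of_lt_of_le hu0 huv
    have hℓv0 : (0:ℝ) < ℓ*v := by positivity
    by_cases h4 : v < 4*u
    · have hm1 : phiStar ω u / u ≤ phiStar ω (ℓ*v)/(ℓ*v) :=
        hω.phiStar_div_mono hu0 (by nlinarith)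
      have hlog : Real.log v ≤ Real.log 4 + Real.log u := by
        calc Real.log v ≤ Real.log (4*u) := Real.log_le_log hv0 (by linarith)
          _ = Real.log 4 + Real.log u := Real.log_mul (by norm_num) (ne_of_gt hu0)
      rw [hA₂def]; linarith
    · push_neg at h4
      set j : ℕ := ⌈u⌉₊ with hjdef
      set k : ℕ := ⌊v⌋₊ with hkdef
      have hj1 : 1 ≤ j := Nat.ceil_pos.2 hu0
      have hju : u ≤ (j:ℝ) := Nat.le_ceil u
      have hj0' : (0:ℝ) < (j:ℝ) := lt_of_lt_of_le hu0 hju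
      have hj2 : (j:ℝ) ≤ 2*u := by
        have := Nat.ceil_lt_add_one (le_of_lt hu0)
        linarith
      have hkv : (k:ℝ) ≤ v := Nat.floor_le hv0.le
      have hkl : v - 1 < (k:ℝ) := Nat.sub_one_lt_floor v
      have hv4 : (4:ℝ) ≤ v := by linarith
      have hk34 : 3/4*v ≤ (k:ℝ) := by linarith
      have hjk : j ≤ k := by
        have h5 : (j:ℝ) < (k:ℝ) := by nlinarith
        exact_mod_cast h5.le
      have hk1 : 1 ≤ k := le_trans hj1 hjk
      have hk0' : (0:ℝ) < (k:ℝ) := by exact_mod_cast hk1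
      have hd := hdisc j k hj1 hjk
      have hm0 : phiStar ω u / u ≤ phiStar ω j / j := hω.phiStar_div_mono hu0 hju
      have hm2 : phiStar ω (ℓ*k)/(ℓ*k) ≤ phiStar ω (ℓ*v)/(ℓ*v) :=
        hω.phiStar_div_mono (by positivity) (mul_le_mul_of_nonneg_left hkv hℓ0.le)
      have hlogj : Real.log j ≤ Real.log 2 + Real.log u := by
        calc Real.log (j:ℝ) ≤ Real.log (2*u) := Real.log_le_log hj0' hj2
          _ = Real.log 2 + Real.log u := Real.log_mul (by norm_num) (ne_of_gt hu0)
      have hlogk : Real.log v + Real.log (3/4) ≤ Real.log k := by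
        calc Real.log v + Real.log (3/4) = Real.log (3/4*v) := by
              rw [Real.log_mul (by norm_num) (ne_of_gt hv0)]; ring
          _ ≤ Real.log k := Real.log_le_log (by positivity) hk34
      have hlog24 : Real.log 2 - Real.log (3/4) ≤ Real.log 4 := by
        rw [← Real.log_div (by norm_num) (by norm_num)]
        exact Real.log_le_log (by norm_num) (by norm_num)
      rw [hA₂def]; linarith
  -- conclude (α₀)
  obtain ⟨T, hT1, hT⟩ := hω.exists_log_le one_pos
  set Cf : ℝ := max 1 (2*ℓ*Real.exp A₂) with hCfdef
  have hCf1 : (1:ℝ) ≤ Cf := le_max_left _ _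
  have h2ℓCf : 2*ℓ*Real.exp A₂ ≤ Cf := le_max_right _ _
  refine ⟨Cf, hCf1, max T (Real.exp 1),
    le_trans (Real.exp_pos 1).le (le_max_right _ _), fun lam hlam t ht => ?_⟩
  have hlam0 : (0:ℝ) < lam := lt_of_lt_of_le one_pos hlam
  have hte : Real.exp 1 ≤ t := le_trans (le_max_right _ _) ht
  have ht0 : (0:ℝ) < t := lt_of_lt_of_le (Real.exp_pos 1) hte
  set z : ℝ := Real.log t with hzdef
  have hz1 : (1:ℝ) ≤ z := by
    rw [hzdef, Real.le_log_iff_exp_le ht0]; exact hte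
  have hωt : z ≤ ω t := by
    have := hT t (le_trans (le_max_left _ _) ht)
    rw [one_mul] at this; exact this
  have hωt1 : (1:ℝ) ≤ ω t := le_trans hz1 hωt
  set s : ℝ := Real.log lam with hsdef
  have hs0 : 0 ≤ s := Real.log_nonneg hlam
  have hslam : s ≤ lam := by
    have := Real.log_le_sub_one_of_pos hlam0; rw [hsdef]; linarith
  set Z : ℝ := Real.log (lam * t) with hZdef
  have hZzs : Z = z + s := by
    rw [hZdef, Real.log_mul (ne_of_gt hlam0) (ne_of_gt ht0), hzdef, hsdef]; ring
  have hZ0 : 0 ≤ Z := by rw [hZzs]; linarith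
  have hexpZ : Real.exp Z = lam * t := Real.exp_log (by positivity)
  have hexpz : Real.exp z = t := Real.exp_log ht0
  obtain ⟨x₀, hsub⟩ := hω.exists_subgradient Z
  have hx₀0 : 0 ≤ x₀ := by
    have h1 := hsub (Z - 1)
    have h2 : ω (Real.exp (Z-1)) ≤ ω (Real.exp Z) := hω.phi_mono (by linarith)
    have hr : x₀ * (Z - 1 - Z) = -x₀ := by ring
    linarith only [h1, h2, hr]
  have hmain : ω (lam * t) ≤ x₀ * Z - phiStar ω x₀ := by
    have hle : phiStar ω x₀ ≤ x₀ * Z - ω (Real.exp Z) := by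
      refine phiStar_le_of hω fun y hy => ?_
      have h1 := hsub y
      have hr : x₀ * (y - Z) = x₀ * y - x₀ * Z := by ring
      linarith only [h1, hr]
    rw [hexpZ] at hle; linarith
  have hωlam0 : 0 ≤ ω (lam*t) := hω.omega_nonneg (by positivity)
  set M₁ : ℝ := ℓ * lam * Real.exp A₂ with hM₁def
  have hexpA₂1 : (1:ℝ) ≤ Real.exp A₂ := by
    rw [show (1:ℝ) = Real.exp 0 from (Real.exp_zero).symm]
    exact Real.exp_le_exp.2 (by linarith)
  have hM₁ℓ : ℓ ≤ M₁ := by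
    have h1 : ℓ*1 ≤ ℓ*lam := mul_le_mul_of_nonneg_left hlam hℓ0.le
    have h2 : (ℓ*lam)*1 ≤ (ℓ*lam)*Real.exp A₂ :=
      mul_le_mul_of_nonneg_left hexpA₂1 (mul_nonneg hℓ0.le hlam0.le)
    rw [hM₁def]; linarith only [h1, h2]
  have hM₁0 : (0:ℝ) < M₁ := lt_of_lt_of_le hℓ0 hM₁ℓ
  have hlogM : Real.log M₁ = Real.log ℓ + s + A₂ := by
    rw [hM₁def, Real.log_mul (by positivity) (ne_of_gt (Real.exp_pos _)),
      Real.log_mul (ne_of_gt hℓ0) (ne_of_gt hlam0), Real.log_exp, hsdef]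
  have hℓx : ℓ*(x₀/ℓ) = x₀ := by field_simp
  have hlzω : lam * z ≤ lam * ω t := mul_le_mul_of_nonneg_left hωt hlam0.le
  rcases lt_or_ge x₀ ℓ with hcase | hcase
  · -- small x₀
    have h1 : ω (lam*t) ≤ x₀ * Z := by linarith [hω.phiStar_nonneg x₀]
    have h2 : x₀ * Z ≤ ℓ * Z := mul_le_mul_of_nonneg_right (le_of_lt hcase) hZ0
    have h3 : z + s ≤ 2*lam*z := by
      have p1 : 0 ≤ lam * (z - 1) := mul_nonneg hlam0.le (by linarith)
      have p2 : 0 ≤ z * (lam - 1) := mul_nonneg (by linarith) (by linarith)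
      linarith only [p1, p2, hslam, hz1]
    have h4 : ℓ * Z ≤ ℓ * (2*lam*z) := by
      rw [hZzs]; exact mul_le_mul_of_nonneg_left h3 hℓ0.le
    have h5 : (2*ℓ)*(lam*z) ≤ Cf*(lam*ω t) := by
      refine mul_le_mul ?_ hlzω (by positivity) (by linarith)
      have h6 : (2*ℓ)*1 ≤ (2*ℓ)*Real.exp A₂ :=
        mul_le_mul_of_nonneg_left hexpA₂1 (by positivity)
      linarith only [h6, h2ℓCf]
    linarith only [h1, h2, h4, h5]
  · -- large x₀
    have hx₀pos : (0:ℝ) < x₀ := lt_of_lt_of_le hℓ0 hcase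
    have hgb := hcont 1 (x₀/ℓ) le_rfl ((one_le_div hℓ0).2 hcase)
    rw [hℓx] at hgb
    have hG1 : (0:ℝ) ≤ phiStar ω 1 / 1 := by
      rw [div_one]; exact hω.phiStar_nonneg 1
    have hlogdiv : Real.log (x₀/ℓ) = Real.log x₀ - Real.log ℓ :=
      Real.log_div (ne_of_gt hx₀pos) (ne_of_gt hℓ0)
    have hGx₀ : Real.log x₀ - Real.log ℓ - A₂ ≤ phiStar ω x₀ / x₀ := by
      rw [hlogdiv, Real.log_one] at hgb; linarith
    rcases lt_or_ge x₀ M₁ with hcase2 | hcase2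
    · -- middle case
      have h5 : x₀*(Real.log x₀ - Real.log ℓ - A₂) ≤ x₀*(phiStar ω x₀/x₀) :=
        mul_le_mul_of_nonneg_left hGx₀ hx₀pos.le
      have h6 : x₀*(phiStar ω x₀/x₀) = phiStar ω x₀ := by field_simp
      rw [h6] at h5
      have hstep : ω (lam*t) ≤ x₀*z + x₀*(Real.log M₁ - Real.log x₀) := by
        have h7 : ω (lam*t) ≤ x₀*(z+s) - x₀*(Real.log x₀ - Real.log ℓ - A₂) := by
          rw [← hZzs]; linarith only [hmain, h5]
        have hring : x₀*(z+s) - x₀*(Real.log x₀ - Real.log ℓ - A₂)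
            = x₀*z + x₀*(Real.log M₁ - Real.log x₀) := by
          rw [hlogM]; ring
        linarith
      have hloglog : x₀*(Real.log M₁ - Real.log x₀) ≤ M₁ - x₀ := by
        have h7 : Real.log M₁ - Real.log x₀ = Real.log (M₁/x₀) :=
          (Real.log_div (ne_of_gt hM₁0) (ne_of_gt hx₀pos)).symm
        have h8 : Real.log (M₁/x₀) ≤ M₁/x₀ - 1 :=
          Real.log_le_sub_one_of_pos (by positivity)
        rw [h7]
        have h9 := mul_le_mul_of_nonneg_left h8 hx₀pos.le
        have h10 : x₀*(M₁/x₀ - 1) = M₁ - x₀ := by field_simp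
        linarith
      have h10 : x₀*z ≤ M₁*z := mul_le_mul_of_nonneg_right hcase2.le (by linarith)
      have hM₁z : M₁*1 ≤ M₁*z := mul_le_mul_of_nonneg_left hz1 hM₁0.le
      have h11 : ω (lam*t) ≤ 2*M₁*z := by
        linarith only [hstep, hloglog, h10, hM₁z, hx₀pos.le]
      have h12 : (2*ℓ*Real.exp A₂)*(lam*z) ≤ Cf*(lam*ω t) :=
        mul_le_mul h2ℓCf hlzω (by positivity) (by linarith)
      have h13 : 2*M₁*z = (2*ℓ*Real.exp A₂)*(lam*z) := by rw [hM₁def]; ring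
      linarith only [h11, h12, h13]
    · -- very large x₀
      have hu1 : 1 ≤ x₀/M₁ := (one_le_div hM₁0).2 hcase2
      have huv : x₀/M₁ ≤ x₀/ℓ := by
        rw [div_le_div_iff₀ hM₁0 hℓ0]
        exact mul_le_mul_of_nonneg_left hM₁ℓ hx₀pos.le
      have hc2 := hcont (x₀/M₁) (x₀/ℓ) hu1 huv
      rw [hℓx] at hc2
      have hlogs : Real.log (x₀/M₁) - Real.log (x₀/ℓ) = Real.log ℓ - Real.log M₁ := by
        rw [Real.log_div (ne_of_gt hx₀pos) (ne_of_gt hM₁0),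
          Real.log_div (ne_of_gt hx₀pos) (ne_of_gt hℓ0)]
        ring
      set u : ℝ := x₀/M₁ with hudef
      have hu0 : (0:ℝ) < u := lt_of_lt_of_le one_pos hu1
      have hGus : phiStar ω u / u + s ≤ phiStar ω x₀ / x₀ := by
        have h5 : Real.log u - Real.log (x₀/ℓ) = Real.log ℓ - Real.log M₁ := hlogs
        rw [hlogM] at h5
        linarith
      have hphiu : u*z - ω t ≤ phiStar ω u := by
        have := hω.phiStar_ge u (y := z) (by linarith)
        rw [hexpz] at this; exact this
      have hGu : z - ω t / u ≤ phiStar ω u / u := by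
        rw [le_div_iff₀ hu0]
        have hid : (z - ω t/u)*u = u*z - ω t := by field_simp
        rw [hid]; exact hphiu
      have h5 : x₀*(z - ω t/u + s) ≤ x₀*(phiStar ω x₀/x₀) :=
        mul_le_mul_of_nonneg_left (by linarith) hx₀pos.le
      have h6 : x₀*(phiStar ω x₀/x₀) = phiStar ω x₀ := by field_simp
      rw [h6] at h5
      have h8 : x₀*(ω t/u) = M₁*ω t := by
        rw [hudef]; field_simp
      have hfin : ω (lam*t) ≤ M₁ * ω t := by
        have h7 : ω (lam*t) ≤ x₀*(z+s) - x₀*(z - ω t/u + s) := by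
          rw [← hZzs]; linarith only [hmain, h5]
        have hring : x₀*(z+s) - x₀*(z - ω t/u + s) = x₀*(ω t/u) := by ring
        rw [hring, h8] at h7; exact h7
      have h12 : M₁*ω t ≤ Cf*lam*ω t := by
        have h13 : ℓ*Real.exp A₂ ≤ Cf := by
          have : 0 ≤ ℓ*Real.exp A₂ := by positivity
          linarith only [this, h2ℓCf]
        have h14 := mul_le_mul_of_nonneg_right h13
          (mul_nonneg hlam0.le (by linarith : (0:ℝ) ≤ ω t))
        rw [hM₁def]; linarith only [h14]
      linarith only [hfin, h12]

end AuxStmt13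

/-- for `ω ∈ W₀`, the associated weight matrix `𝓜_ω` satisfies `(𝓜_{rai})`
if and only if `ω` satisfies `(α₀)`. -/
theorem stmt_13 (ω : ℝ → ℝ) (hω : InW0 ω) :
    Mrai (Wmat ω) ↔ Alpha0 ω :=
  ⟨alpha0_of_mrai hω, mrai_of_alpha0 hω⟩
end
end
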